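/- arXiv:1007.1039 — 4 statements merged into one kernel-verified Lean document; each statement's English description precedes it below -/
import Mathlib

section
/- For every n ≥ 1, the characteristic polynomial of −Q^{(n)} has n distinct roots, all of which are real and strictly positive; that is, −Q^{(n)} has n distinct positive real eigenvalues λ_1^{(n)} < λ_2^{(n)} < ⋯ < λ_n^{(n)}. -/
/-!
With the weights `μ = bdWeight a b` of the chain, detailed balance
`μ (i+1) * a (i+1) = μ i * b i` makes `diag μ * (-Q)` the Gram matrix of the Dirichlet form
`∑ i, μ i * b i * (x i - x (i+1))^2` (with `x n = 0`), which is positive definite. Conjugating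
`-Q` by `diag √μ` therefore gives a positive definite symmetric matrix with the same
characteristic polynomial, so the eigenvalues are real and positive. That matrix is tridiagonal
with nonzero superdiagonal, so an eigenvector is determined by its first coordinate; two
orthonormal eigenvectors cannot share an eigenvalue.
-/

open Polynomial in
/-- The generator `Q^(n)` of the birth–death chain on `{0,…,n}` absorbed at `n`,
restricted to the transient states `{0,…,n-1}`. -/
noncomputable def bdMatrix (a b : ℕ → ℝ) (n : ℕ) : Matrix (Fin n) (Fin n) ℝ :=
  fun i j =>
    if (j : ℕ) = (i : ℕ) + 1 then b i
    else if (i : ℕ) = (j : ℕ) + 1 then a i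
    else if (i : ℕ) = (j : ℕ) then
      (if (i : ℕ) = 0 then -(b 0) else -(a i + b i))
    else 0

open Polynomial Matrix

theorem Tuple.strictMono_comp_sort {α : Type*} [LinearOrder α] {n : ℕ} {f : Fin n → α}
    (hf : Function.Injective f) : StrictMono (f ∘ Tuple.sort f) :=
  (Tuple.monotone_sort f).strictMono_of_injective (hf.comp (Tuple.sort f).injective)

namespace Matrix

section UpperShift

def upperShift (R : Type*) [Zero R] [One R] (n : ℕ) : Matrix (Fin n) (Fin n) R :=
  of fun i j => if (j : ℕ) = i + 1 then 1 else 0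

variable {R : Type*} {n : ℕ}

theorem upperShift_apply [Zero R] [One R] (i j : Fin n) :
    upperShift R n i j = if (j : ℕ) = i + 1 then 1 else 0 := rfl

theorem upperShift_transpose_mul_diagonal_mul_upperShift [NonAssocSemiring R] (w : ℕ → R) :
    (upperShift R n)ᵀ * diagonal (fun i : Fin n => w i) * upperShift R n =
      diagonal (fun i : Fin n => if (i : ℕ) = 0 then 0 else w (i - 1)) := by
  ext i j
  rw [mul_apply, diagonal_apply]
  simp only [mul_diagonal, transpose_apply, upperShift_apply, ite_mul, one_mul, zero_mul]
  by_cases hi : (i : ℕ) = 0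
  · rw [if_pos hi, ite_self]
    exact Finset.sum_eq_zero fun k _ => by simp [hi]
  rw [if_neg hi, Finset.sum_eq_single ⟨i - 1, by omega⟩ fun k _ hk => ?_,
    if_pos (by simp; omega)]
  · simp [Fin.ext_iff, show (i : ℕ) - 1 + 1 = i by omega, eq_comm]
  · simp
  · rw [if_neg fun h => hk (Fin.ext (by simp; omega))]

theorem det_one_sub_upperShift [CommRing R] : (1 - upperShift R n).det = 1 := by
  have htri : (1 - upperShift R n).IsUpperTriangular := by
    intro i j hij
    have hji : j < i := hij
    have : (j : ℕ) ≠ i + 1 := by omega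
    simp [upperShift_apply, hji.ne', this]
  rw [det_of_isUpperTriangular htri]
  simp [upperShift_apply]

end UpperShift

section Symmetrization

variable {n : Type*} [Fintype n] [DecidableEq n]

theorem charpoly_diagonal_mul_mul_diagonal_inv {K : Type*} [Field K] {d : n → K}
    (hd : ∀ i, d i ≠ 0) (B : Matrix n n K) :
    (diagonal d * B * diagonal (fun i => (d i)⁻¹)).charpoly = B.charpoly := by
  rw [charpoly_mul_comm, ← mul_assoc, diagonal_mul_diagonal]
  simp [hd]

theorem PosDef.diagonal_sqrt_mul_mul_diagonal_inv_sqrt {d : n → ℝ} (hd : ∀ i, 0 < d i)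
    {B : Matrix n n ℝ} (hB : (diagonal d * B).PosDef) :
    (diagonal (fun i => √(d i)) * B * diagonal (fun i => (√(d i))⁻¹)).PosDef := by
  have hsqrt : ∀ i, √(d i) ≠ 0 := fun i => (Real.sqrt_pos.mpr (hd i)).ne'
  have hinj : Function.Injective (diagonal (fun i => (√(d i))⁻¹)).mulVec := by
    intro x y hxy
    ext i
    simpa [mulVec_diagonal, hsqrt] using congrFun hxy i
  convert hB.conjTranspose_mul_mul_same hinj using 1
  rw [diagonal_conjTranspose, star_trivial, ← mul_assoc, diagonal_mul_diagonal]
  congr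
  ext i
  rw [inv_mul_eq_div, Real.div_sqrt]

end Symmetrization

section SimpleSpectrum

theorem eq_zero_of_mulVec_eq_smul_of_superdiag {R : Type*} [Ring R] [NoZeroDivisors R]
    {n : ℕ} {A : Matrix (Fin n) (Fin n) R}
    (h_above : ∀ i j : Fin n, (i : ℕ) + 1 < j → A i j = 0)
    (h_superdiag : ∀ i j : Fin n, (j : ℕ) = i + 1 → A i j ≠ 0)
    {c : R} {u : Fin n → R} (hu : A *ᵥ u = c • u)
    (hu₀ : ∀ i : Fin n, (i : ℕ) = 0 → u i = 0) : u = 0 := by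
  suffices h : ∀ k, ∀ i : Fin n, (i : ℕ) ≤ k → u i = 0 from funext fun i => h i i le_rfl
  intro k
  induction k with
  | zero => exact fun i hi => hu₀ i (Nat.le_zero.mp hi)
  | succ k ih =>
    intro i hi
    rcases Nat.lt_or_eq_of_le hi with hi | hi
    · exact ih i (Nat.lt_succ_iff.mp hi)
    let m : Fin n := ⟨k, by omega⟩
    -- row `m` of the eigen-equation has the single unknown term `A m i * u i`
    have hrow : A m i * u i = 0 := by
      have := congrFun hu m
      rw [Pi.smul_apply, ih m le_rfl, smul_zero, mulVec, dotProduct,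
        Finset.sum_eq_single i] at this
      · exact this
      · intro j _ hji
        rcases le_or_gt (j : ℕ) k with hj | hj
        · rw [ih j hj, mul_zero]
        · rw [h_above m j (by simp [m]; omega), zero_mul]
      · simp
    exact (mul_eq_zero.mp hrow).resolve_left (h_superdiag m i hi)

theorem IsHermitian.injective_eigenvalues_of_eigenvector_apply_eq_zero {n : Type*} [Fintype n]
    [DecidableEq n] {A : Matrix n n ℝ} (hA : A.IsHermitian) (i₀ : n)
    (h : ∀ (c : ℝ) (u : n → ℝ), A *ᵥ u = c • u → u i₀ = 0 → u = 0) :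
    Function.Injective hA.eigenvalues := by
  intro i j hij
  by_contra hne
  let e := hA.eigenvectorBasis
  have hu : A *ᵥ ⇑(e j i₀ • e i - e i i₀ • e j) =
      hA.eigenvalues i • ⇑(e j i₀ • e i - e i i₀ • e j) := by
    simp only [WithLp.ofLp_sub, WithLp.ofLp_smul, mulVec_sub, mulVec_smul, e,
      hA.mulVec_eigenvectorBasis, hij, smul_sub, smul_comm (hA.eigenvalues j)]
  have hu0 : e j i₀ • e i + (-e i i₀) • e j = 0 := by
    ext k
    simpa [sub_eq_add_neg] using congrFun (h _ _ hu (by simp [mul_comm])) k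
  have hw0 : e j i₀ = 0 :=
    ((LinearIndepOn.pair_iff e hne).mp (e.orthonormal.linearIndependent.linearIndepOn _) _ _ hu0).1
  refine e.orthonormal.ne_zero j ?_
  ext k
  simpa using congrFun (h _ _ (hA.mulVec_eigenvectorBasis j) hw0) k

theorem IsHermitian.injective_eigenvalues_of_superdiag {n : ℕ}
    {A : Matrix (Fin n) (Fin n) ℝ} (hA : A.IsHermitian)
    (h_above : ∀ i j : Fin n, (i : ℕ) + 1 < j → A i j = 0)
    (h_superdiag : ∀ i j : Fin n, (j : ℕ) = i + 1 → A i j ≠ 0) :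
    Function.Injective hA.eigenvalues := fun i _ hij =>
  hA.injective_eigenvalues_of_eigenvector_apply_eq_zero ⟨0, i.pos⟩
    (fun _ _ hu hu₀ => eq_zero_of_mulVec_eq_smul_of_superdiag h_above h_superdiag hu
      fun k hk => (Fin.ext hk : k = ⟨0, i.pos⟩) ▸ hu₀) hij

end SimpleSpectrum

end Matrix

noncomputable def bdWeight (a b : ℕ → ℝ) : ℕ → ℝ
  | 0 => 1
  | i + 1 => bdWeight a b i * b i / a (i + 1)

section BirthDeath

variable {a b : ℕ → ℝ}

theorem bdWeight_pos (ha : ∀ i, 0 < a (i + 1)) (hb : ∀ i, 0 < b i) : ∀ i, 0 < bdWeight a b i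
  | 0 => one_pos
  | i + 1 => div_pos (mul_pos (bdWeight_pos ha hb i) (hb i)) (ha i)

theorem bdWeight_succ_mul {i : ℕ} (ha : a (i + 1) ≠ 0) :
    bdWeight a b (i + 1) * a (i + 1) = bdWeight a b i * b i :=
  div_mul_cancel₀ _ ha

theorem diagonal_bdWeight_mul_neg_bdMatrix (ha : ∀ i, a (i + 1) ≠ 0) (n : ℕ) :
    diagonal (fun i : Fin n => bdWeight a b i) * -bdMatrix a b n =
      (1 - upperShift ℝ n)ᵀ * diagonal (fun i : Fin n => bdWeight a b i * b i) *
        (1 - upperShift ℝ n) := by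
  simp only [transpose_sub, transpose_one, sub_mul, mul_sub, one_mul, mul_one,
    upperShift_transpose_mul_diagonal_mul_upperShift (fun i => bdWeight a b i * b i)]
  ext ⟨i, hi⟩ ⟨j, hj⟩
  simp only [Matrix.sub_apply, diagonal_mul, mul_diagonal, transpose_apply, upperShift_apply,
    diagonal_apply, Matrix.neg_apply, bdMatrix, Fin.mk.injEq]
  split_ifs <;> try omega
  · ring
  · obtain rfl : i = j + 1 := by assumption
    linear_combination (-1 : ℝ) * bdWeight_succ_mul (b := b) (ha j)
  · obtain rfl : i = 0 := by assumption
    ring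
  · obtain ⟨k, rfl⟩ : ∃ k, i = k + 1 := ⟨i - 1, by omega⟩
    rw [Nat.add_sub_cancel]
    linear_combination bdWeight_succ_mul (b := b) (ha k)
  · ring

theorem posDef_diagonal_bdWeight_mul_neg_bdMatrix (ha : ∀ i, 0 < a (i + 1)) (hb : ∀ i, 0 < b i)
    (n : ℕ) : (diagonal (fun i : Fin n => bdWeight a b i) * -bdMatrix a b n).PosDef := by
  have hW : (diagonal (fun i : Fin n => bdWeight a b i * b i)).PosDef :=
    .diagonal fun i => mul_pos (bdWeight_pos ha hb i) (hb i)
  have hG : Function.Injective (1 - upperShift ℝ n).mulVec :=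
    mulVec_injective_iff_isUnit.mpr <| (isUnit_iff_isUnit_det _).mpr <| by
      rw [det_one_sub_upperShift]; exact isUnit_one
  rw [diagonal_bdWeight_mul_neg_bdMatrix fun i => (ha i).ne',
    ← conjTranspose_eq_transpose_of_trivial]
  exact hW.conjTranspose_mul_mul_same hG

theorem bdMatrix_apply_of_add_one_lt {n : ℕ} {i j : Fin n} (h : (i : ℕ) + 1 < j) :
    bdMatrix a b n i j = 0 := by
  simp only [bdMatrix]
  rw [if_neg (by omega), if_neg (by omega), if_neg (by omega)]

theorem bdMatrix_apply_of_eq_add_one {n : ℕ} {i j : Fin n} (h : (j : ℕ) = i + 1) :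
    bdMatrix a b n i j = b i := by
  simp only [bdMatrix, if_pos h]

end BirthDeath

theorem bdMatrix_eigenvalues_real_distinct_positive_general
    (a b : ℕ → ℝ) (ha : ∀ i, 1 ≤ i → 0 < a i) (hb : ∀ i, 0 < b i)
    (n : ℕ) :
    ∃ lam : Fin n → ℝ, StrictMono lam ∧ (∀ ν, 0 < lam ν) ∧
      (-(bdMatrix a b n)).charpoly =
        ∏ ν : Fin n, (Polynomial.X - Polynomial.C (lam ν)) := by
  have ha' : ∀ i, 0 < a (i + 1) := fun i => ha _ i.succ_pos
  have hμ : ∀ i : Fin n, 0 < bdWeight a b i := fun i => bdWeight_pos ha' hb i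
  have hsqrt : ∀ i : Fin n, √(bdWeight a b i) ≠ 0 := fun i => (Real.sqrt_pos.mpr (hμ i)).ne'
  have hS := PosDef.diagonal_sqrt_mul_mul_diagonal_inv_sqrt hμ
    (posDef_diagonal_bdWeight_mul_neg_bdMatrix ha' hb n)
  have hinj : Function.Injective hS.1.eigenvalues := by
    refine hS.1.injective_eigenvalues_of_superdiag (fun i j h => ?_) (fun i j h => ?_)
    · simp [diagonal_mul, mul_diagonal, bdMatrix_apply_of_add_one_lt h]
    · simp [diagonal_mul, mul_diagonal, bdMatrix_apply_of_eq_add_one h, hsqrt, (hb i).ne']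
  refine ⟨hS.1.eigenvalues ∘ Tuple.sort hS.1.eigenvalues, Tuple.strictMono_comp_sort hinj,
    fun ν => hS.eigenvalues_pos _, ?_⟩
  rw [← charpoly_diagonal_mul_mul_diagonal_inv hsqrt, hS.1.charpoly_eq,
    ← Equiv.prod_comp (Tuple.sort hS.1.eigenvalues)]
  simp

/-- for every `n ≥ 1`, the characteristic polynomial of `-Q^(n)` has `n`
distinct real roots, all strictly positive. -/
theorem bdMatrix_eigenvalues_real_distinct_positive
    (a b : ℕ → ℝ) (ha : ∀ i, 1 ≤ i → 0 < a i) (hb : ∀ i, 0 < b i)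
    (n : ℕ) (hn : 1 ≤ n) :
    ∃ lam : Fin n → ℝ, StrictMono lam ∧ (∀ ν, 0 < lam ν) ∧
      (-(bdMatrix a b n)).charpoly =
        ∏ ν : Fin n, (Polynomial.X - Polynomial.C (lam ν)) :=
  bdMatrix_eigenvalues_real_distinct_positive_general a b ha hb n
end

section
/- For all integers 0 ≤ n < N, the matrix −Q̂_n^{(N)} is invertible and the trace of its inverse equals Σ_{j=n}^{N} (1/(μ_j b_j)) Σ_{i=j+1}^{N} μ_i. Equivalently, the sum of the reciprocals of the eigenvalues of −Q̂_n^{(N)} equals Σ_{j=n}^{N} (1/(μ_j b_j)) Σ_{i=j+1}^{N} μ_i (which is the expected hitting time E T_{N,n} of state n from state N). -/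
/-- `μ_0 = 1`, `μ_i = (b_0 ⋯ b_{i-1})/(a_1 ⋯ a_i)` for `i ≥ 1`. -/
noncomputable def bdMu (a b : ℕ → ℝ) (i : ℕ) : ℝ :=
  (∏ k ∈ Finset.range i, b k) / (∏ k ∈ Finset.range i, a (k + 1))

/-- The generator `Q̂_n^{(N)}` of the birth–death chain on `{n,…,N}` absorbed at `n` and
reflected at `N`, restricted to `{n+1,…,N}`.  The index `i : Fin (N - n)` corresponds to the
state `n + 1 + i`. -/
noncomputable def bdMatrixHat (a b : ℕ → ℝ) (n N : ℕ) :
    Matrix (Fin (N - n)) (Fin (N - n)) ℝ :=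
  fun i j =>
    if (j : ℕ) = (i : ℕ) + 1 then b (n + 1 + i)
    else if (i : ℕ) = (j : ℕ) + 1 then a (n + 1 + i)
    else if (i : ℕ) = (j : ℕ) then
      (if n + 1 + (i : ℕ) = N then -(a N) else -(a (n + 1 + i) + b (n + 1 + i)))
    else 0

/-!
The Green function of the chain killed at `n` is `G(x, y) = μ_y S(min x y)`, where
`S(m) = Σ_{k=n}^{m-1} 1/(μ_k b_k)` is the scale function. Detailed balance
`μ_{x+1} a_{x+1} = μ_x b_x` makes `G(·, y)` harmonic for the generator away from `y`, with
unit jump at `y`; it vanishes at the absorbing state `n` and is constant beyond `y`, which takes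
care of the reflecting state `N`. Hence `−Q̂ G = 1`, and the trace
`Σ_x μ_x S(x)` is the stated double sum after exchanging the order of summation.
-/

open Finset Matrix

noncomputable def bdScale (a b : ℕ → ℝ) (n m : ℕ) : ℝ :=
  ∑ k ∈ Ico n m, 1 / (bdMu a b k * b k)

noncomputable def bdGreen (a b : ℕ → ℝ) (n x y : ℕ) : ℝ :=
  bdMu a b y * bdScale a b n (min x y)

noncomputable def bdGreenMatrix (a b : ℕ → ℝ) (n N : ℕ) :
    Matrix (Fin (N - n)) (Fin (N - n)) ℝ :=
  Matrix.of fun i j => bdGreen a b n (n + 1 + i) (n + 1 + j)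

section BirthDeath

variable {a b : ℕ → ℝ}

theorem bdMu_succ (m : ℕ) : bdMu a b (m + 1) = bdMu a b m * b m / a (m + 1) := by
  simp only [bdMu, prod_range_succ]
  rw [mul_div_mul_comm, mul_div_assoc]

theorem bdMu_ne_zero (ha : ∀ k, 1 ≤ k → a k ≠ 0) (hb : ∀ k, b k ≠ 0) (m : ℕ) :
    bdMu a b m ≠ 0 :=
  div_ne_zero (prod_ne_zero_iff.2 fun k _ => hb k)
    (prod_ne_zero_iff.2 fun k _ => ha (k + 1) k.succ_pos)

theorem bdGreen_self_left {n y : ℕ} (hny : n ≤ y) : bdGreen a b n n y = 0 := by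
  simp [bdGreen, bdScale, min_eq_left hny]

theorem bdGreen_succ_sub {n x : ℕ} (hnx : n ≤ x) (y : ℕ) :
    bdGreen a b n (x + 1) y - bdGreen a b n x y =
      if x < y then bdMu a b y / (bdMu a b x * b x) else 0 := by
  unfold bdGreen
  split_ifs with hxy
  · rw [min_eq_left (by omega), min_eq_left hxy.le, bdScale, bdScale, sum_Ico_succ_top hnx]
    ring
  · rw [min_eq_right (by omega), min_eq_right (by omega), sub_self]

theorem bdGreen_generator (ha : ∀ k, 1 ≤ k → a k ≠ 0) (hb : ∀ k, b k ≠ 0)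
    {n x : ℕ} (hnx : n ≤ x) (y : ℕ) :
    a (x + 1) * (bdGreen a b n x y - bdGreen a b n (x + 1) y)
      + b (x + 1) * (bdGreen a b n (x + 2) y - bdGreen a b n (x + 1) y)
      = -if x + 1 = y then 1 else 0 := by
  rw [← neg_sub, bdGreen_succ_sub hnx, bdGreen_succ_sub (by omega : n ≤ x + 1)]
  have hμx := bdMu_ne_zero ha hb x
  have hax := ha (x + 1) x.succ_pos
  have hbx := hb x
  have hbx1 := hb (x + 1)
  rcases lt_trichotomy (x + 1) y with hlt | rfl | hgt
  · rw [if_pos (by omega), if_pos hlt, if_neg hlt.ne, bdMu_succ]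
    field_simp
    ring
  · rw [if_pos x.lt_succ_self, if_neg (lt_irrefl _), if_pos rfl, bdMu_succ]
    field_simp
    ring
  · rw [if_neg (by omega), if_neg (by omega), if_neg hgt.ne']
    ring

theorem bdMatrixHat_mulVec_apply {n N : ℕ} (f : ℕ → ℝ) (hf : f n = 0) (i : Fin (N - n)) :
    (bdMatrixHat a b n N *ᵥ fun k => f (n + 1 + k)) i =
      a (n + i + 1) * (f (n + i) - f (n + i + 1)) +
        if n + i + 1 = N then 0 else b (n + i + 1) * (f (n + i + 2) - f (n + i + 1)) := by
  obtain ⟨i, hi⟩ := i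
  simp only [mulVec, dotProduct, bdMatrixHat]
  set x := n + 1 + i
  rw [Fin.sum_univ_eq_sum_range (fun k => (if k = i + 1 then b x
    else if i = k + 1 then a x else if i = k then
      (if x = N then -(a N) else -(a x + b x)) else 0) * f (n + 1 + k))]
  have hsplit : ∀ k, (if k = i + 1 then b x else if i = k + 1 then a x else if i = k then
      (if x = N then -(a N) else -(a x + b x)) else 0) * f (n + 1 + k) =
      (if i + 1 = k then b x * f (n + 1 + k) else 0)
        + (if k + 1 = i then a x * f (n + 1 + k) else 0)
        + (if i = k then (if x = N then -a N else -(a x + b x)) * f (n + 1 + k) else 0) := by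
    intro k
    split_ifs <;> first | omega | ring
  have hprev : ∑ k ∈ range (N - n), (if k + 1 = i then a x * f (n + 1 + k) else 0)
      = a x * f (n + i) := by
    cases i with
    | zero => simp [hf]
    | succ j =>
      simp only [add_left_inj, sum_ite_eq', mem_range]
      rw [if_pos (by omega)]
      ring_nf
  rw [sum_congr rfl fun k _ => hsplit k, sum_add_distrib, sum_add_distrib, hprev,
    sum_ite_eq, sum_ite_eq, if_pos (mem_range.2 hi)]
  rw [show n + i + 2 = n + 1 + (i + 1) by omega, show n + i + 1 = x by omega,
    show n + 1 + i = x from rfl]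
  by_cases hxN : x = N
  · rw [if_neg (by rw [mem_range]; omega), if_pos hxN, if_pos hxN, hxN]
    ring
  · rw [if_pos (by rw [mem_range]; omega), if_neg hxN, if_neg hxN]
    ring

theorem bdMatrixHat_mul_bdGreenMatrix (ha : ∀ k, 1 ≤ k → a k ≠ 0) (hb : ∀ k, b k ≠ 0)
    (n N : ℕ) : bdMatrixHat a b n N * bdGreenMatrix a b n N = -1 := by
  ext i j
  set y := n + 1 + (j : ℕ)
  have hyN : y ≤ N := by omega
  have hcol : (bdMatrixHat a b n N * bdGreenMatrix a b n N) i j =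
      (bdMatrixHat a b n N *ᵥ fun k => bdGreen a b n (n + 1 + k) y) i := rfl
  have hreflect : n + i + 1 = N →
      bdGreen a b n (n + i + 2) y - bdGreen a b n (n + i + 1) y = 0 := fun hN => by
    rw [bdGreen_succ_sub (by omega : n ≤ n + i + 1), if_neg (by omega)]
  rw [hcol, bdMatrixHat_mulVec_apply (bdGreen a b n · y) (bdGreen_self_left (by omega)),
    ite_eq_right_iff.2 fun hN => by rw [hreflect hN, mul_zero],
    bdGreen_generator ha hb (by omega), neg_apply, one_apply]
  have hdiag : n + i + 1 = y ↔ i = j := by rw [Fin.ext_iff]; omega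
  simp only [hdiag]

theorem trace_bdGreenMatrix (n N : ℕ) :
    trace (bdGreenMatrix a b n N) = ∑ x ∈ Icc (n + 1) N, bdMu a b x * bdScale a b n x := by
  simp only [trace, diag_apply, bdGreenMatrix, of_apply, bdGreen, min_self]
  rw [Fin.sum_univ_eq_sum_range (fun i => bdMu a b (n + 1 + i) * bdScale a b n (n + 1 + i)),
    ← Ico_add_one_right_eq_Icc, sum_Ico_eq_sum_range, Nat.add_sub_add_right]

theorem sum_mul_bdScale (n N : ℕ) :
    ∑ x ∈ Icc (n + 1) N, bdMu a b x * bdScale a b n x =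
      ∑ j ∈ Icc n N, 1 / (bdMu a b j * b j) * ∑ x ∈ Icc (j + 1) N, bdMu a b x := by
  simp only [bdScale, mul_sum]
  refine (sum_comm' fun x j => ?_).trans
    (sum_congr rfl fun j _ => sum_congr rfl fun x _ => mul_comm _ _)
  simp only [mem_Icc, mem_Ico]
  omega

end BirthDeath

theorem trace_inverse_eq_mean_hitting_time_general
    (a b : ℕ → ℝ) (ha : ∀ k, 1 ≤ k → 0 < a k) (hb : ∀ k, 0 < b k)
    (n N : ℕ) :
    IsUnit (-(bdMatrixHat a b n N)).det ∧
    Matrix.trace (-(bdMatrixHat a b n N))⁻¹ =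
      ∑ j ∈ Finset.Icc n N,
        (1 / (bdMu a b j * b j)) * ∑ i ∈ Finset.Icc (j + 1) N, bdMu a b i := by
  have hQG := bdMatrixHat_mul_bdGreenMatrix (fun k hk => (ha k hk).ne') (fun k => (hb k).ne') n N
  have hinv : -bdMatrixHat a b n N * bdGreenMatrix a b n N = 1 := by
    rw [neg_mul, hQG, neg_neg]
  refine ⟨isUnit_det_of_right_inverse hinv, ?_⟩
  rw [inv_eq_right_inv hinv, trace_bdGreenMatrix, sum_mul_bdScale]

/-- for `0 ≤ n < N`, the matrix `−Q̂_n^{(N)}` is invertible and the trace of its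
inverse (the sum of the reciprocal eigenvalues, i.e. the mean hitting time `E T_{N,n}`)
equals `Σ_{j=n}^{N} (1/(μ_j b_j)) Σ_{i=j+1}^{N} μ_i`. -/
theorem trace_inverse_eq_mean_hitting_time
    (a b : ℕ → ℝ) (ha : ∀ k, 1 ≤ k → 0 < a k) (hb : ∀ k, 0 < b k)
    (n N : ℕ) (hnN : n < N) :
    IsUnit (-(bdMatrixHat a b n N)).det ∧
    Matrix.trace (-(bdMatrixHat a b n N))⁻¹ =
      ∑ j ∈ Finset.Icc n N,
        (1 / (bdMu a b j * b j)) * ∑ i ∈ Finset.Icc (j + 1) N, bdMu a b i :=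
  trace_inverse_eq_mean_hitting_time_general a b ha hb n N
end

section
/- For every real θ with 0 ≤ θ < (Σ_{ν=1}^∞ 1/λ_ν)^{−1}, one has E[e^{θT}] ≤ (1 − θ·E[T])^{−1} = (1 − θ Σ_{ν=1}^∞ 1/λ_ν)^{−1}. (Exponential moment bound for a sum of independent exponential random variables, used to bound the tail of the strong stationary time.) -/
/-!
For a finite set of indices, independence factorises `E[e^{θ ∑ X_ν}]` into the product of the
exponential moment generating functions `λ_ν / (λ_ν - θ) = (1 - θ/λ_ν)⁻¹`, and the Weierstrass
inequality `∏ (1 - a_ν) ≥ 1 - ∑ a_ν` bounds this product by `(1 - θ ∑ 1/λ_ν)⁻¹`. Since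
`E[T] = ∑ 1/λ_ν < ∞`, the sum `T` is finite almost surely, so the partial sums converge to it and
Fatou's lemma carries the bound over to `T`.
-/

open MeasureTheory ProbabilityTheory Real Set Filter Topology
open scoped ENNReal

theorem Finset.one_sub_sum_le_prod_one_sub {ι R : Type*} [CommRing R] [LinearOrder R]
    [IsStrictOrderedRing R] (s : Finset ι) {a : ι → R} (h0 : ∀ i ∈ s, 0 ≤ a i)
    (h1 : ∀ i ∈ s, a i ≤ 1) : 1 - ∑ i ∈ s, a i ≤ ∏ i ∈ s, (1 - a i) := by
  induction s using Finset.cons_induction with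
  | empty => simp
  | cons j s _ ih =>
    simp only [Finset.forall_mem_cons] at h0 h1
    have hprod : 0 ≤ ∏ i ∈ s, (1 - a i) := Finset.prod_nonneg fun i hi => sub_nonneg.2 (h1.2 i hi)
    rw [Finset.sum_cons, Finset.prod_cons]
    nlinarith [ih h0.2 h1.2, Finset.sum_nonneg h0.2]

theorem Finset.prod_inv_one_sub_le_inv_one_sub_sum {ι K : Type*} [Field K] [LinearOrder K]
    [IsStrictOrderedRing K] (s : Finset ι) {a : ι → K} (h0 : ∀ i ∈ s, 0 ≤ a i)
    (h1 : ∑ i ∈ s, a i < 1) : ∏ i ∈ s, (1 - a i)⁻¹ ≤ (1 - ∑ i ∈ s, a i)⁻¹ := by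
  rw [Finset.prod_inv_distrib]
  exact inv_anti₀ (sub_pos.2 h1) <| s.one_sub_sum_le_prod_one_sub h0 fun i hi =>
    (Finset.single_le_sum h0 hi).trans h1.le

theorem ae_nonneg_expMeasure (r : ℝ) : ∀ᵐ x ∂expMeasure r, 0 ≤ x := by
  change ∀ᵐ x ∂volume.withDensity (exponentialPDF r), 0 ≤ x
  rw [ae_iff]
  simp only [not_le]
  exact (withDensity_apply _ measurableSet_Iio).trans (lintegral_exponentialPDF_of_nonpos le_rfl)

theorem lintegral_expMeasure {r : ℝ} {f : ℝ → ℝ≥0∞} (hf : Measurable f) :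
    ∫⁻ x, f x ∂expMeasure r = ∫⁻ x in Ioi 0, ENNReal.ofReal (r * exp (-(r * x))) * f x := by
  change ∫⁻ x, f x ∂volume.withDensity (exponentialPDF r) = _
  rw [lintegral_withDensity_eq_lintegral_mul _
    (show Measurable (exponentialPDF r) from (measurable_exponentialPDFReal r).ennreal_ofReal) hf,
    Measure.restrict_congr_set Ioi_ae_eq_Ici, ← lintegral_indicator measurableSet_Ici]
  congr 1 with x
  by_cases hx : 0 ≤ x <;> simp [exponentialPDF_eq, hx]

theorem lintegral_ofReal_exp_mul_expMeasure {r θ : ℝ} (hr : 0 < r) (hθ : θ < r) :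
    ∫⁻ x, ENNReal.ofReal (exp (θ * x)) ∂expMeasure r = ENNReal.ofReal (r / (r - θ)) := by
  have hneg : θ - r < 0 := by linarith
  calc ∫⁻ x, ENNReal.ofReal (exp (θ * x)) ∂expMeasure r
      = ∫⁻ x in Ioi 0, ENNReal.ofReal (r * exp ((θ - r) * x)) := by
        rw [lintegral_expMeasure (by fun_prop)]
        refine lintegral_congr fun x => ?_
        rw [← ENNReal.ofReal_mul (by positivity), mul_assoc, ← exp_add]
        ring_nf
    _ = ENNReal.ofReal (∫ x in Ioi 0, r * exp ((θ - r) * x)) :=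
        (ofReal_integral_eq_lintegral_ofReal ((integrableOn_exp_mul_Ioi hneg 0).const_mul r)
          (ae_of_all _ fun x => by positivity)).symm
    _ = ENNReal.ofReal (r / (r - θ)) := by
        rw [integral_const_mul, integral_exp_mul_Ioi hneg, mul_zero, exp_zero, neg_div,
          ← div_neg, neg_sub, mul_one_div]

theorem lintegral_ofReal_expMeasure {r : ℝ} (hr : 0 < r) :
    ∫⁻ x, ENNReal.ofReal x ∂expMeasure r = ENNReal.ofReal r⁻¹ := by
  have hGamma : ∫ x in Ioi 0, r * (x ^ ((2 : ℝ) - 1) * exp (-(r * x))) = r⁻¹ := by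
    rw [integral_const_mul, integral_rpow_mul_exp_neg_mul_Ioi two_pos hr, Real.Gamma_two,
      Real.rpow_two]
    field_simp
  calc ∫⁻ x, ENNReal.ofReal x ∂expMeasure r
      = ∫⁻ x in Ioi 0, ENNReal.ofReal (r * (x ^ ((2 : ℝ) - 1) * exp (-(r * x)))) := by
        rw [lintegral_expMeasure (by fun_prop)]
        refine lintegral_congr fun x => ?_
        rw [← ENNReal.ofReal_mul (by positivity), show (2 : ℝ) - 1 = 1 by norm_num, rpow_one,
          mul_assoc, mul_comm (exp _)]
    _ = ENNReal.ofReal r⁻¹ := by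
        rw [← hGamma, ofReal_integral_eq_lintegral_ofReal
          (Integrable.of_integral_ne_zero (by rw [hGamma]; positivity))
          ((ae_restrict_iff' measurableSet_Ioi).2
            (ae_of_all _ fun x (hx : 0 < x) => by positivity))]

theorem tendsto_sum_range_toReal_tsum_ofReal {x : ℕ → ℝ} (hx : ∀ n, 0 ≤ x n)
    (h : ∑' n, ENNReal.ofReal (x n) ≠ ⊤) :
    Tendsto (fun n => ∑ i ∈ Finset.range n, x i) atTop
      (𝓝 (∑' n, ENNReal.ofReal (x n)).toReal) := by
  convert (ENNReal.tendsto_toReal h).comp (ENNReal.tendsto_nat_tsum _) using 2 with n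
  simp [ENNReal.toReal_sum, ENNReal.toReal_ofReal (hx _)]

section IndepExponentials

variable {ι Ω : Type*} [MeasurableSpace Ω] {P : Measure Ω} {X : ι → Ω → ℝ} {lam : ι → ℝ}

theorem lintegral_ofReal_exp_mul_sum_eq_prod (hindep : iIndepFun X P)
    (hmeas : ∀ i, Measurable (X i)) (hexp : ∀ i, P.map (X i) = expMeasure (lam i))
    {s : Finset ι} {θ : ℝ} (hpos : ∀ i ∈ s, 0 < lam i) (hθ : ∀ i ∈ s, θ < lam i) :
    ∫⁻ ω, ENNReal.ofReal (exp (θ * ∑ i ∈ s, X i ω)) ∂P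
      = ∏ i ∈ s, ENNReal.ofReal (lam i / (lam i - θ)) := by
  have hφ : Measurable fun x => ENNReal.ofReal (exp (θ * x)) := by fun_prop
  calc ∫⁻ ω, ENNReal.ofReal (exp (θ * ∑ i ∈ s, X i ω)) ∂P
      = ∫⁻ ω, ∏ i ∈ s, ENNReal.ofReal (exp (θ * X i ω)) ∂P := by
        simp_rw [Finset.mul_sum, exp_sum, ENNReal.ofReal_prod_of_nonneg fun _ _ => (exp_pos _).le]
    _ = ∏ i ∈ s, ∫⁻ ω, ENNReal.ofReal (exp (θ * X i ω)) ∂P :=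
        lintegral_prod_eq_prod_lintegral_of_indepFun s _ (hindep.comp _ fun _ => hφ)
          fun i => hφ.comp (hmeas i)
    _ = ∏ i ∈ s, ENNReal.ofReal (lam i / (lam i - θ)) := Finset.prod_congr rfl fun i hi => by
        rw [← lintegral_map hφ (hmeas i), hexp i,
          lintegral_ofReal_exp_mul_expMeasure (hpos i hi) (hθ i hi)]

theorem lintegral_ofReal_exp_mul_sum_le (hindep : iIndepFun X P)
    (hmeas : ∀ i, Measurable (X i)) (hexp : ∀ i, P.map (X i) = expMeasure (lam i))
    (hpos : ∀ i, 0 < lam i) (hsum : Summable fun i => 1 / lam i) {θ : ℝ} (hθ0 : 0 ≤ θ)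
    (hθ : θ * ∑' i, 1 / lam i < 1) (s : Finset ι) :
    ∫⁻ ω, ENNReal.ofReal (exp (θ * ∑ i ∈ s, X i ω)) ∂P
      ≤ ENNReal.ofReal (1 - θ * ∑' i, 1 / lam i)⁻¹ := by
  have hinv_nonneg : ∀ i, 0 ≤ 1 / lam i := fun i => (one_div_pos.2 (hpos i)).le
  have hpartial : ∑ i ∈ s, θ * (1 / lam i) ≤ θ * ∑' i, 1 / lam i := by
    rw [← Finset.mul_sum]
    exact mul_le_mul_of_nonneg_left (hsum.sum_le_tsum s fun i _ => hinv_nonneg i) hθ0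
  have hθlam : ∀ i, θ < lam i := fun i => by
    have := (mul_le_mul_of_nonneg_left (hsum.le_tsum i fun j _ => hinv_nonneg j) hθ0).trans_lt hθ
    rwa [mul_one_div, div_lt_one (hpos i)] at this
  have hfactor : ∀ i, lam i / (lam i - θ) = (1 - θ * (1 / lam i))⁻¹ := fun i => by
    have := (hpos i).ne'
    field_simp
  rw [lintegral_ofReal_exp_mul_sum_eq_prod hindep hmeas hexp (fun i _ => hpos i)
    (fun i _ => hθlam i), ← ENNReal.ofReal_prod_of_nonneg fun i _ =>
      div_nonneg (hpos i).le (sub_pos.2 (hθlam i)).le]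
  refine ENNReal.ofReal_le_ofReal ?_
  calc ∏ i ∈ s, lam i / (lam i - θ) = ∏ i ∈ s, (1 - θ * (1 / lam i))⁻¹ :=
        Finset.prod_congr rfl fun i _ => hfactor i
    _ ≤ (1 - ∑ i ∈ s, θ * (1 / lam i))⁻¹ :=
        s.prod_inv_one_sub_le_inv_one_sub_sum (fun i _ => mul_nonneg hθ0 (hinv_nonneg i))
          (hpartial.trans_lt hθ)
    _ ≤ (1 - θ * ∑' i, 1 / lam i)⁻¹ := inv_anti₀ (by linarith) (by linarith)

theorem ae_tsum_ofReal_lt_top [Countable ι] (hmeas : ∀ i, Measurable (X i))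
    (hexp : ∀ i, P.map (X i) = expMeasure (lam i)) (hpos : ∀ i, 0 < lam i)
    (hsum : Summable fun i => 1 / lam i) :
    ∀ᵐ ω ∂P, ∑' i, ENNReal.ofReal (X i ω) < ⊤ := by
  refine ae_lt_top (Measurable.tsum fun i => (hmeas i).ennreal_ofReal) ?_
  have hmean : ∀ i, ∫⁻ ω, ENNReal.ofReal (X i ω) ∂P = ENNReal.ofReal (1 / lam i) := fun i => by
    rw [← lintegral_map ENNReal.measurable_ofReal (hmeas i), hexp i,
      lintegral_ofReal_expMeasure (hpos i), one_div]
  rw [lintegral_tsum fun i => (hmeas i).ennreal_ofReal.aemeasurable, tsum_congr hmean,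
    ← ENNReal.ofReal_tsum_of_nonneg (fun i => (one_div_pos.2 (hpos i)).le) hsum]
  exact ENNReal.ofReal_ne_top

end IndepExponentials

open MeasureTheory ProbabilityTheory in
theorem exponential_moment_bound_sum_indep_exponentials_general
    {Ω : Type*} [MeasurableSpace Ω] (P : Measure Ω)
    (lam : ℕ → ℝ) (hpos : ∀ ν, 0 < lam ν)
    (hsum : Summable fun ν => 1 / lam ν)
    (X : ℕ → Ω → ℝ) (hmeas : ∀ ν, Measurable (X ν))
    (hindep : iIndepFun X P)
    (hexp : ∀ ν, Measure.map (X ν) P = expMeasure (lam ν)) :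
    ∀ θ : ℝ, 0 ≤ θ → θ < (∑' ν : ℕ, 1 / lam ν)⁻¹ →
      ∫⁻ ω,
          (if (∑' ν : ℕ, ENNReal.ofReal (X ν ω)) < ⊤ then
            ENNReal.ofReal
              (Real.exp (θ * (∑' ν : ℕ, ENNReal.ofReal (X ν ω)).toReal))
          else ⊤) ∂P ≤
        ENNReal.ofReal ((1 - θ * ∑' ν : ℕ, 1 / lam ν)⁻¹) := by
  intro θ hθ0 hθ
  have hS : 0 < ∑' ν, 1 / lam ν :=
    hsum.tsum_pos (fun ν => (one_div_pos.2 (hpos ν)).le) 0 (one_div_pos.2 (hpos 0))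
  have hθS : θ * ∑' ν, 1 / lam ν < 1 := (lt_div_iff₀ hS).1 (by rwa [one_div])
  have hnonneg : ∀ᵐ ω ∂P, ∀ ν, 0 ≤ X ν ω := ae_all_iff.2 fun ν =>
    ae_of_ae_map (hmeas ν).aemeasurable (by rw [hexp]; exact ae_nonneg_expMeasure _)
  have hlim : ∀ᵐ ω ∂P, Tendsto (fun n => ENNReal.ofReal (exp (θ * ∑ ν ∈ Finset.range n, X ν ω)))
      atTop (𝓝 (if (∑' ν : ℕ, ENNReal.ofReal (X ν ω)) < ⊤ then
        ENNReal.ofReal (exp (θ * (∑' ν : ℕ, ENNReal.ofReal (X ν ω)).toReal)) else ⊤)) := by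
    filter_upwards [hnonneg, ae_tsum_ofReal_lt_top hmeas hexp hpos hsum] with ω hω hT
    rw [if_pos hT]
    exact ENNReal.tendsto_ofReal
      ((tendsto_sum_range_toReal_tsum_ofReal hω hT.ne).const_mul θ).rexp
  rw [lintegral_congr_ae (hlim.mono fun ω h => h.liminf_eq.symm)]
  refine (lintegral_liminf_le fun n => by fun_prop).trans ?_
  exact liminf_le_of_frequently_le' (Frequently.of_forall fun n =>
    lintegral_ofReal_exp_mul_sum_le hindep hmeas hexp hpos hsum hθ0 hθS _)

open MeasureTheory ProbabilityTheory in
/-- for a sum `T = Σ_ν X_ν` of countably many independent exponential random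
variables with rates `λ_ν` having summable reciprocals, and `0 ≤ θ < (Σ_ν 1/λ_ν)⁻¹`, one has
`E[e^{θT}] ≤ (1 − θ·Σ_ν 1/λ_ν)⁻¹` (with `e^{θ·∞} = ∞`). -/
theorem exponential_moment_bound_sum_indep_exponentials
    {Ω : Type*} [MeasurableSpace Ω] (P : Measure Ω) [IsProbabilityMeasure P]
    (lam : ℕ → ℝ) (hpos : ∀ ν, 0 < lam ν)
    (hsum : Summable fun ν => 1 / lam ν)
    (X : ℕ → Ω → ℝ) (hmeas : ∀ ν, Measurable (X ν))
    (hindep : iIndepFun X P)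
    (hexp : ∀ ν, Measure.map (X ν) P = expMeasure (lam ν)) :
    ∀ θ : ℝ, 0 ≤ θ → θ < (∑' ν : ℕ, 1 / lam ν)⁻¹ →
      ∫⁻ ω,
          (if (∑' ν : ℕ, ENNReal.ofReal (X ν ω)) < ⊤ then
            ENNReal.ofReal
              (Real.exp (θ * (∑' ν : ℕ, ENNReal.ofReal (X ν ω)).toReal))
          else ⊤) ∂P ≤
        ENNReal.ofReal ((1 - θ * ∑' ν : ℕ, 1 / lam ν)⁻¹) :=
  exponential_moment_bound_sum_indep_exponentials_general P lam hpos hsum X hmeas hindep hexp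
end

section
/- (Intertwining Λ Q = Q* Λ.) For all i, k ≥ 0, Σ_{j=0}^∞ Λ_{i,j} q_{j,k} = Σ_{j=0}^∞ q*_{i,j} Λ_{j,k}, where both sums have only finitely many nonzero terms; that is, the link matrix Λ intertwines the birth–death generator Q with the dual generator Q*. -/
/-- The stationary weights `π_i = μ_i / μ`, where `μ = Σ_j μ_j`. -/
noncomputable def bdPi (a b : ℕ → ℝ) (i : ℕ) : ℝ :=
  bdMu a b i / ∑' j : ℕ, bdMu a b j

/-- `H_i = Σ_{j=0}^i π_j`. -/
noncomputable def bdH (a b : ℕ → ℝ) (i : ℕ) : ℝ :=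
  ∑ j ∈ Finset.range (i + 1), bdPi a b j

/-- Dual death rates `a*_i = (H_{i−1}/H_i)·b_i` (used for `i ≥ 1`). -/
noncomputable def bdAStar (a b : ℕ → ℝ) (i : ℕ) : ℝ :=
  (bdH a b (i - 1) / bdH a b i) * b i

/-- Dual birth rates `b*_i = (H_{i+1}/H_i)·a_{i+1}`. -/
noncomputable def bdBStar (a b : ℕ → ℝ) (i : ℕ) : ℝ :=
  (bdH a b (i + 1) / bdH a b i) * a (i + 1)

/-- Dual masses `μ*_0 = 1`, `μ*_i = (b*_0 ⋯ b*_{i−1})/(a*_1 ⋯ a*_i)`. -/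
noncomputable def bdMuStar (a b : ℕ → ℝ) (i : ℕ) : ℝ :=
  bdMu (bdAStar a b) (bdBStar a b) i

/-- The entries `q_{i,j}` of the birth–death generator with death rates `a` and
birth rates `b`. -/
noncomputable def bdQEntry (a b : ℕ → ℝ) (i j : ℕ) : ℝ :=
  if j = i + 1 then b i
  else if i = j + 1 then a i
  else if i = j then (if i = 0 then -(b 0) else -(a i + b i))
  else 0

/-- The link matrix `Λ_{i,j} = π_j/H_i` for `j ≤ i`, and `0` otherwise. -/
noncomputable def bdLink (a b : ℕ → ℝ) (i j : ℕ) : ℝ :=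
  if j ≤ i then bdPi a b j / bdH a b i else 0

/-! Detailed balance `π_j b_j = π_{j+1} a_{j+1}` makes the partial column sums
`Σ_{j ≤ i} π_j q_{j,k}` telescope to the flux `π_i b_i (δ_{k,i+1} - δ_{k,i})` across the cut
between `i` and `i + 1`; dividing by `H_i` gives `(ΛQ)_{i,k}`. On the other side
`Λ_{j,k} = π_k [k ≤ j] / H_j`, and `(Q*Λ)_{i,k}` collapses to the same expression through
`a*_{i}/H_{i-1} = b_i/H_i`, `b*_i/H_{i+1} = a_{i+1}/H_i` and `a*_i + b*_i = b_i + a_{i+1}`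
(`b*_0 = b_0 + a_1` at the boundary). -/

open Finset

section Generator

variable (a b : ℕ → ℝ)

@[simp] theorem bdQEntry_self_succ (i : ℕ) : bdQEntry a b i (i + 1) = b i := by
  simp [bdQEntry]

@[simp] theorem bdQEntry_succ_self (i : ℕ) : bdQEntry a b (i + 1) i = a (i + 1) := by
  simp only [bdQEntry]; split_ifs <;> first | rfl | omega

@[simp] theorem bdQEntry_zero_zero : bdQEntry a b 0 0 = -b 0 := by
  simp [bdQEntry]

@[simp] theorem bdQEntry_succ_succ (i : ℕ) :
    bdQEntry a b (i + 1) (i + 1) = -(a (i + 1) + b (i + 1)) := by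
  simp [bdQEntry]

theorem bdQEntry_eq_zero {i j : ℕ} (h : j + 1 < i ∨ i + 1 < j) : bdQEntry a b i j = 0 := by
  simp only [bdQEntry]
  split_ifs <;> first | rfl | omega

theorem tsum_bdQEntry_zero_mul (f : ℕ → ℝ) :
    ∑' j, bdQEntry a b 0 j * f j = b 0 * (f 1 - f 0) := by
  rw [tsum_eq_sum (s := {0, 1}) fun j hj => by
    simp only [mem_insert, mem_singleton, not_or] at hj
    rw [bdQEntry_eq_zero a b (by omega), zero_mul]]
  simp
  ring

theorem tsum_bdQEntry_succ_mul (n : ℕ) (f : ℕ → ℝ) :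
    ∑' j, bdQEntry a b (n + 1) j * f j =
      a (n + 1) * (f n - f (n + 1)) + b (n + 1) * (f (n + 2) - f (n + 1)) := by
  rw [tsum_eq_sum (s := {n, n + 1, n + 2}) fun j hj => by
    simp only [mem_insert, mem_singleton, not_or] at hj
    rw [bdQEntry_eq_zero a b (by omega), zero_mul]]
  simp
  ring

theorem sum_range_mul_bdQEntry {p : ℕ → ℝ} (hdb : ∀ j, p j * b j = p (j + 1) * a (j + 1))
    (i k : ℕ) :
    ∑ j ∈ range (i + 1), p j * bdQEntry a b j k =
      p i * b i * ((if k = i + 1 then 1 else 0) - (if k = i then 1 else 0)) := by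
  induction i with
  | zero =>
    obtain rfl | rfl | hk : k = 0 ∨ k = 1 ∨ 1 < k := by omega
    all_goals simp (disch := omega) [if_neg, bdQEntry_eq_zero]
  | succ i ih =>
    rw [sum_range_succ, ih]
    obtain hk | rfl | rfl | rfl | hk : k < i ∨ k = i ∨ k = i + 1 ∨ k = i + 2 ∨ i + 2 < k := by
      omega
    all_goals simp (disch := omega) [if_neg, bdQEntry_eq_zero]
    · linear_combination -hdb k
    · linear_combination hdb i

end Generator

section Stationary

variable {a b : ℕ → ℝ}

theorem bdPi_detailed_balance (ha : ∀ i, a (i + 1) ≠ 0) (j : ℕ) :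
    bdPi a b j * b j = bdPi a b (j + 1) * a (j + 1) := by
  simp only [bdPi, bdMu, prod_range_succ]
  field_simp [ha j]

theorem bdH_zero : bdH a b 0 = bdPi a b 0 := by
  simp [bdH]

theorem bdH_succ (n : ℕ) : bdH a b (n + 1) = bdH a b n + bdPi a b (n + 1) :=
  sum_range_succ _ _

theorem bdMu_pos (ha : ∀ i, 1 ≤ i → 0 < a i) (hb : ∀ i, 0 < b i) (i : ℕ) : 0 < bdMu a b i :=
  div_pos (prod_pos fun k _ => hb k) (prod_pos fun k _ => ha (k + 1) k.succ_pos)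

theorem bdH_pos (ha : ∀ i, 1 ≤ i → 0 < a i) (hb : ∀ i, 0 < b i) (hmu : Summable (bdMu a b))
    (i : ℕ) : 0 < bdH a b i := by
  have hsum : 0 < ∑' j, bdMu a b j :=
    hmu.tsum_pos (fun j => (bdMu_pos ha hb j).le) 0 (bdMu_pos ha hb 0)
  exact sum_pos (fun j _ => div_pos (bdMu_pos ha hb j) hsum) nonempty_range_add_one

end Stationary

section Link

variable {a b : ℕ → ℝ}

theorem tsum_bdLink_mul_bdQEntry (hdb : ∀ j, bdPi a b j * b j = bdPi a b (j + 1) * a (j + 1))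
    (i k : ℕ) :
    ∑' j, bdLink a b i j * bdQEntry a b j k =
      bdPi a b i * b i * ((if k = i + 1 then 1 else 0) - (if k = i then 1 else 0)) /
        bdH a b i := by
  rw [tsum_eq_sum (s := range (i + 1)) fun j hj => by
    rw [bdLink, if_neg (by simpa [Nat.lt_succ_iff] using hj), zero_mul]]
  rw [← sum_range_mul_bdQEntry a b hdb, sum_div]
  refine sum_congr rfl fun j hj => ?_
  rw [bdLink, if_pos (Nat.lt_succ_iff.mp (mem_range.mp hj)), div_mul_eq_mul_div]

variable (hH : ∀ i, bdH a b i ≠ 0)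
include hH

theorem bdAStar_succ_div (n : ℕ) :
    bdAStar a b (n + 1) / bdH a b n = b (n + 1) / bdH a b (n + 1) := by
  rw [bdAStar, Nat.add_sub_cancel]
  field_simp [hH n, hH (n + 1)]

theorem bdBStar_div (i : ℕ) : bdBStar a b i / bdH a b (i + 1) = a (i + 1) / bdH a b i := by
  rw [bdBStar]
  field_simp [hH i, hH (i + 1)]

variable (hdb : ∀ j, bdPi a b j * b j = bdPi a b (j + 1) * a (j + 1))
include hdb

theorem bdBStar_zero : bdBStar a b 0 = b 0 + a 1 := by
  rw [bdBStar, bdH_succ, zero_add]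
  field_simp [hH 0]
  linear_combination -(b 0) * bdH_zero (a := a) (b := b) - hdb 0

theorem bdAStar_add_bdBStar (n : ℕ) :
    bdAStar a b (n + 1) + bdBStar a b (n + 1) = b (n + 1) + a (n + 2) := by
  rw [bdAStar, bdBStar, Nat.add_sub_cancel, bdH_succ (n + 1)]
  field_simp [hH (n + 1)]
  linear_combination -b (n + 1) * bdH_succ n (a := a) (b := b) - hdb (n + 1)

theorem tsum_bdQEntry_dual_mul_bdLink (i k : ℕ) :
    ∑' j, bdQEntry (bdAStar a b) (bdBStar a b) i j * bdLink a b j k =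
      bdPi a b i * b i * ((if k = i + 1 then 1 else 0) - (if k = i then 1 else 0)) /
        bdH a b i := by
  cases i with
  | zero =>
    rw [tsum_bdQEntry_zero_mul]
    obtain rfl | rfl | hk : k = 0 ∨ k = 1 ∨ 1 < k := by omega
    · simp [bdLink]
      linear_combination
        bdPi a b 0 * bdBStar_div hH 0 - bdPi a b 0 / bdH a b 0 * bdBStar_zero hH hdb
    · simp [bdLink]
      linear_combination bdPi a b 1 * bdBStar_div hH 0 - hdb 0 / bdH a b 0
    · simp (disch := omega) [bdLink, if_neg]
  | succ n =>
    rw [tsum_bdQEntry_succ_mul]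
    obtain hk | rfl | rfl | hk : k ≤ n ∨ k = n + 1 ∨ k = n + 2 ∨ n + 2 < k := by omega
    · simp (disch := omega) [bdLink, if_neg, if_pos]
      linear_combination bdPi a b k * bdAStar_succ_div hH n + bdPi a b k * bdBStar_div hH (n + 1) -
        bdPi a b k / bdH a b (n + 1) * bdAStar_add_bdBStar hH hdb n
    · simp [bdLink]
      linear_combination bdPi a b (n + 1) * bdBStar_div hH (n + 1) -
        bdPi a b (n + 1) / bdH a b (n + 1) * bdAStar_add_bdBStar hH hdb n
    · simp [bdLink]
      linear_combination bdPi a b (n + 2) * bdBStar_div hH (n + 1) - hdb (n + 1) / bdH a b (n + 1)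
    · simp (disch := omega) [bdLink, if_neg]

end Link

/-- intertwining `Λ Q = Q* Λ`: for all `i, k`,
`Σ_j Λ_{i,j} q_{j,k} = Σ_j q*_{i,j} Λ_{j,k}` (both sums having finitely many
nonzero terms). -/
theorem link_intertwines_generators
    (a b : ℕ → ℝ) (ha : ∀ i, 1 ≤ i → 0 < a i) (hb : ∀ i, 0 < b i)
    (hmu : Summable (bdMu a b)) :
    ∀ i k : ℕ,
      ∑' j : ℕ, bdLink a b i j * bdQEntry a b j k =
        ∑' j : ℕ, bdQEntry (bdAStar a b) (bdBStar a b) i j * bdLink a b j k := by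
  have hdb := bdPi_detailed_balance (b := b) fun i => (ha (i + 1) i.succ_pos).ne'
  have hH := fun i => (bdH_pos ha hb hmu i).ne'
  intro i k
  rw [tsum_bdLink_mul_bdQEntry hdb, tsum_bdQEntry_dual_mul_bdLink hH hdb]
end
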